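/- Let v ∈ V with v ≠ 0 and let d(v) = lim_{i→∞}(log‖A_{i+1}v‖ − log‖A_i v‖) (which exists and is an eigenvalue of Λ). If w ∈ V is the limit of a subsequence of the normalized vectors A_{i} v / ‖A_{i} v‖, then Λ w = d(v) · w; in particular w is a unit eigenvector of Λ with eigenvalue d(v). -/

import Mathlib

/-! Passing to the limit along the subsequence in `A (i + 1) ∘ (A i)⁻¹ → exp Λ`, and in the inverse
maps `A i ∘ (A (i + 1))⁻¹ → exp (-Λ)`, gives `‖exp Λ w‖ = e^c`, `‖exp (-Λ) w‖ = e^(-c)` and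
`‖w‖ = 1`. Writing `w = ∑ aⱼ eⱼ` in an orthonormal eigenbasis of `Λ` with eigenvalues `μⱼ`, these
say `∑ |aⱼ|² e^(±2μⱼ) = e^(±2c) ∑ |aⱼ|²`, hence `∑ |aⱼ|² (e^(2μⱼ - 2c) + e^(2c - 2μⱼ) - 2) = 0`.
Since `eˣ + e⁻ˣ ≥ 2` with equality only at `x = 0`, every `aⱼ ≠ 0` has `μⱼ = c`, so `Λ w = c w`. -/

open Filter Topology

theorem ContinuousLinearMap.exp_apply_of_apply_eq_smul {𝕜 E : Type*} [RCLike 𝕜]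
    [NormedAddCommGroup E] [NormedSpace 𝕜 E] [CompleteSpace E]
    {T : E →L[𝕜] E} {μ : 𝕜} {u : E} (h : T u = μ • u) :
    NormedSpace.exp T u = NormedSpace.exp μ • u := by
  have hpow : ∀ n : ℕ, (T ^ n) u = μ ^ n • u := by
    intro n
    induction n with
    | zero => simp
    | succ n ih => rw [pow_succ, mul_apply_eq_comp, h, map_smul, ih, smul_smul, ← pow_succ']
  have hT := (NormedSpace.exp_series_hasSum_exp' (𝕂 := 𝕜) T).mapL (apply 𝕜 E u)
  have hμ := (NormedSpace.exp_series_hasSum_exp' (𝕂 := 𝕜) μ).smul_const u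
  refine hT.unique (hμ.congr_fun fun n => ?_)
  simp [hpow, smul_smul]

section OrthonormalBasis

variable {ι 𝕜 E F : Type*} [Fintype ι] [RCLike 𝕜] [NormedAddCommGroup E] [InnerProductSpace 𝕜 E]
  [FunLike F E E] [LinearMapClass F 𝕜 E E] (b : OrthonormalBasis ι 𝕜 E) {S : F} {ρ : ι → 𝕜}

theorem OrthonormalBasis.repr_apply_of_apply_eq_smul (hS : ∀ i, S (b i) = ρ i • b i)
    (x : E) (i : ι) : b.repr (S x) i = ρ i * b.repr x i := by
  classical
  conv_lhs => rw [← b.sum_repr x]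
  simp [map_sum, hS, OrthonormalBasis.repr_self, Pi.single_apply, mul_comm]

theorem OrthonormalBasis.norm_sq_apply_of_apply_eq_smul (hS : ∀ i, S (b i) = ρ i • b i)
    (x : E) : ‖S x‖ ^ 2 = ∑ i, ‖ρ i‖ ^ 2 * ‖b.repr x i‖ ^ 2 := by
  rw [← b.repr.norm_map, EuclideanSpace.norm_sq_eq]
  simp [b.repr_apply_of_apply_eq_smul hS, mul_pow]

end OrthonormalBasis

theorem Finset.eq_of_sum_mul_exp_eq {ι : Type*} (s : Finset ι) {t μ : ι → ℝ} {c : ℝ}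
    (ht : ∀ i ∈ s, 0 ≤ t i)
    (hpos : ∑ i ∈ s, t i * Real.exp (μ i) = Real.exp c * ∑ i ∈ s, t i)
    (hneg : ∑ i ∈ s, t i * Real.exp (-μ i) = Real.exp (-c) * ∑ i ∈ s, t i) :
    ∀ i ∈ s, t i ≠ 0 → μ i = c := by
  have hzero : ∑ i ∈ s, t i * (Real.exp (μ i - c) + Real.exp (c - μ i) - 2) = 0 := by
    have hexp : Real.exp (-c) * Real.exp c = 1 := by
      rw [← Real.exp_add, neg_add_cancel, Real.exp_zero]
    calc ∑ i ∈ s, t i * (Real.exp (μ i - c) + Real.exp (c - μ i) - 2)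
        = Real.exp (-c) * ∑ i ∈ s, t i * Real.exp (μ i)
          + Real.exp c * ∑ i ∈ s, t i * Real.exp (-μ i) - 2 * ∑ i ∈ s, t i := by
          rw [Finset.mul_sum, Finset.mul_sum, Finset.mul_sum, ← Finset.sum_add_distrib,
            ← Finset.sum_sub_distrib]
          refine Finset.sum_congr rfl fun i _ => ?_
          simp only [sub_eq_add_neg, Real.exp_add]
          ring
      _ = 0 := by rw [hpos, hneg]; linear_combination 2 * (∑ i ∈ s, t i) * hexp
  have hnonneg : ∀ i ∈ s, 0 ≤ t i * (Real.exp (μ i - c) + Real.exp (c - μ i) - 2) :=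
    fun i hi => mul_nonneg (ht i hi)
      (by linarith [Real.add_one_le_exp (μ i - c), Real.add_one_le_exp (c - μ i)])
  intro i hi hti
  by_contra hne
  rcases mul_eq_zero.1 ((Finset.sum_eq_zero_iff_of_nonneg hnonneg).1 hzero i hi) with h | h
  · exact hti h
  · linarith [Real.add_one_lt_exp (sub_ne_zero.2 hne), Real.add_one_le_exp (c - μ i)]

theorem OrthonormalBasis.norm_sq_exp_apply_of_apply_eq_smul {ι E : Type*} [Fintype ι]
    [NormedAddCommGroup E] [InnerProductSpace ℂ E] [CompleteSpace E] (b : OrthonormalBasis ι ℂ E)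
    {S : E →L[ℂ] E} {ν : ι → ℝ} (hS : ∀ i, S (b i) = (ν i : ℂ) • b i) (x : E) :
    ‖NormedSpace.exp S x‖ ^ 2 = ∑ i, ‖b.repr x i‖ ^ 2 * Real.exp (2 * ν i) := by
  have hexp (i) : NormedSpace.exp S (b i) = (Real.exp (ν i) : ℂ) • b i := by
    rw [S.exp_apply_of_apply_eq_smul (hS i), ← Complex.exp_eq_exp_ℂ, Complex.ofReal_exp]
  rw [b.norm_sq_apply_of_apply_eq_smul hexp]
  refine Finset.sum_congr rfl fun i _ => ?_
  rw [Complex.norm_real, Real.norm_of_nonneg (Real.exp_pos _).le, ← Real.exp_nat_mul,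
    Nat.cast_ofNat, mul_comm]

theorem IsSelfAdjoint.apply_eq_smul_of_norm_exp_apply {E : Type*}
    [NormedAddCommGroup E] [InnerProductSpace ℂ E] [FiniteDimensional ℂ E]
    {T : E →L[ℂ] E} (hT : IsSelfAdjoint T) {w : E} {c : ℝ}
    (hpos : ‖NormedSpace.exp T w‖ = Real.exp c * ‖w‖)
    (hneg : ‖NormedSpace.exp (-T) w‖ = Real.exp (-c) * ‖w‖) :
    T w = (c : ℂ) • w := by
  have hsym : (T : E →ₗ[ℂ] E).IsSymmetric := hT.isSymmetric
  set b := hsym.eigenvectorBasis rfl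
  set μ := hsym.eigenvalues rfl
  set t := fun i => ‖b.repr w i‖ ^ 2
  have heig : ∀ i, T (b i) = (μ i : ℂ) • b i := hsym.apply_eigenvectorBasis rfl
  have hnorm_exp : ‖NormedSpace.exp T w‖ ^ 2 = ∑ i, t i * Real.exp (2 * μ i) :=
    b.norm_sq_exp_apply_of_apply_eq_smul heig w
  have hnorm_exp_neg : ‖NormedSpace.exp (-T) w‖ ^ 2 = ∑ i, t i * Real.exp (2 * -μ i) :=
    b.norm_sq_exp_apply_of_apply_eq_smul (ν := fun i => -μ i) (fun i => by
      rw [neg_apply, heig, Complex.ofReal_neg, neg_smul]) w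
  have hnorm : ‖w‖ ^ 2 = ∑ i, t i := by rw [← b.repr.norm_map, EuclideanSpace.norm_sq_eq]
  have hsq (x : ℝ) : Real.exp x ^ 2 = Real.exp (2 * x) := by
    rw [← Real.exp_nat_mul, Nat.cast_ofNat]
  have hμ : ∀ i, t i ≠ 0 → 2 * μ i = 2 * c := by
    refine fun i hi => Finset.univ.eq_of_sum_mul_exp_eq (μ := fun i => 2 * μ i)
      (fun i _ => by positivity) ?_ ?_ i (Finset.mem_univ i) hi
    · rw [← hnorm_exp, hpos, ← hnorm, mul_pow, hsq]
    · simp only [← mul_neg]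
      rw [← hnorm_exp_neg, hneg, ← hnorm, mul_pow, hsq]
  apply b.repr.injective
  ext i
  rw [b.repr_apply_of_apply_eq_smul heig, map_smul, PiLp.smul_apply, smul_eq_mul]
  by_cases hi : t i = 0
  · simp_all [t]
  · rw [show μ i = c by linarith [hμ i hi]]

theorem ContinuousLinearMap.norm_apply_eq_of_tendsto {ι 𝕜 E F : Type*}
    [NontriviallyNormedField 𝕜] [NormedAddCommGroup E] [NormedSpace 𝕜 E]
    [NormedAddCommGroup F] [NormedSpace 𝕜 F] {l : Filter ι} [l.NeBot]
    {T : ι → E →L[𝕜] F} {S : E →L[𝕜] F} {x : ι → E} {y : E} {r : ℝ}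
    (hT : Tendsto T l (𝓝 S)) (hx : Tendsto x l (𝓝 y))
    (hr : Tendsto (fun i => ‖T i (x i)‖) l (𝓝 r)) : ‖S y‖ = r :=
  tendsto_nhds_unique ((isBoundedBilinearMap_apply.continuous.tendsto (S, y)).comp
    (hT.prodMk_nhds hx)).norm hr

theorem ContinuousLinearMap.tendsto_ringInverse_of_tendsto_exp {ι 𝕜 E : Type*} [RCLike 𝕜]
    [NormedAddCommGroup E] [NormedSpace 𝕜 E] [CompleteSpace E] {l : Filter ι}
    {T : ι → E →L[𝕜] E} {S : E →L[𝕜] E} (h : Tendsto T l (𝓝 (NormedSpace.exp S))) :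
    Tendsto (fun i => Ring.inverse (T i)) l (𝓝 (NormedSpace.exp (-S))) := by
  -- the `exp` lemmas for operators are stated for `ℚ`-algebras
  let := NormedAlgebra.restrictScalars ℚ 𝕜 (E →L[𝕜] E)
  have hu := NormedSpace.isUnit_exp S
  have hinv := (NormedRing.inverse_continuousAt hu.unit).tendsto
  rw [hu.unit_spec, Ring.inverse_exp] at hinv
  exact hinv.comp h

theorem ContinuousLinearEquiv.ringInverse_comp_symm {𝕜 E : Type*} [NontriviallyNormedField 𝕜]
    [NormedAddCommGroup E] [NormedSpace 𝕜 E] (A B : E ≃L[𝕜] E) :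
    Ring.inverse ((B : E →L[𝕜] E) ∘L (A.symm : E →L[𝕜] E)) =
      (A : E →L[𝕜] E) ∘L (B.symm : E →L[𝕜] E) := by
  rw [ContinuousLinearEquiv.comp_coe, ContinuousLinearMap.ringInverse_equiv,
    ContinuousLinearMap.inverse_equiv]
  rfl

theorem norm_apply_eq_of_tendsto_comp_symm {E : Type*} [NormedAddCommGroup E] [NormedSpace ℂ E]
    {A B : ℕ → E ≃L[ℂ] E} {S : E →L[ℂ] E} {v w : E} {r : ℝ} {ψ : ℕ → ℕ}
    (hAB : Tendsto (fun i => (B i : E →L[ℂ] E) ∘L ((A i).symm : E →L[ℂ] E)) atTop (𝓝 S))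
    (hr : Tendsto (fun i => ‖B i v‖ / ‖A i v‖) atTop (𝓝 r)) (hψ : Tendsto ψ atTop atTop)
    (hw : Tendsto (fun m => ‖A (ψ m) v‖⁻¹ • A (ψ m) v) atTop (𝓝 w)) : ‖S w‖ = r := by
  refine ContinuousLinearMap.norm_apply_eq_of_tendsto (hAB.comp hψ) hw
    ((hr.comp hψ).congr fun m => ?_)
  simp [norm_smul, div_eq_inv_mul]

theorem stmt_2_general {V : Type*} [NormedAddCommGroup V] [InnerProductSpace ℂ V]
    [FiniteDimensional ℂ V]
    (Λ : V →L[ℂ] V) (hΛ : IsSelfAdjoint Λ)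
    (A : ℕ → (V ≃L[ℂ] V))
    (hA : Tendsto (fun i => ((A (i+1) : V →L[ℂ] V).comp ((A i).symm : V →L[ℂ] V)))
      atTop (𝓝 (NormedSpace.exp Λ)))
    (v : V) (hv : v ≠ 0) (c : ℝ)
    (hc : Tendsto (fun i => Real.log ‖A (i+1) v‖ - Real.log ‖A i v‖) atTop (𝓝 c))
    (w : V) (φ : ℕ → ℕ) (hφ : StrictMono φ)
    (hw : Tendsto (fun m => ‖A (φ m) v‖⁻¹ • (A (φ m) v)) atTop (𝓝 w)) :
    Λ w = (c : ℂ) • w ∧ ‖w‖ = 1 := by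
  have hAv (i : ℕ) : A i v ≠ 0 := (A i).map_ne_zero_iff.2 hv
  have hw_norm : ‖w‖ = 1 :=
    tendsto_nhds_unique hw.norm
      (tendsto_const_nhds.congr fun m => (norm_smul_inv_norm (hAv _)).symm)
  have hratio : Tendsto (fun i => ‖A (i+1) v‖ / ‖A i v‖) atTop (𝓝 (Real.exp c)) :=
    ((Real.continuous_exp.tendsto c).comp hc).congr fun i => by
      simp [Real.exp_sub, Real.exp_log, norm_pos_iff, hAv]
  have hexp : ‖NormedSpace.exp Λ w‖ = Real.exp c :=
    norm_apply_eq_of_tendsto_comp_symm hA hratio hφ.tendsto_atTop hw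
  have hexp_neg : ‖NormedSpace.exp (-Λ) w‖ = Real.exp (-c) := by
    -- along `ψ m = φ (m + 1) - 1` the vectors `A (ψ m + 1) v` run through the given subsequence
    have hψ (m : ℕ) : φ (m + 1) - 1 + 1 = φ (m + 1) :=
      Nat.sub_add_cancel ((Nat.le_add_left 1 m).trans (hφ.id_le _))
    refine norm_apply_eq_of_tendsto_comp_symm (A := fun i => A (i + 1)) (B := A) (v := v)
      (ψ := fun m => φ (m + 1) - 1) ?_ ?_ ?_ ?_
    · simpa only [ContinuousLinearEquiv.ringInverse_comp_symm] using
        ContinuousLinearMap.tendsto_ringInverse_of_tendsto_exp hA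
    · simpa only [Real.exp_neg, inv_div] using hratio.inv₀ (Real.exp_pos c).ne'
    · exact (tendsto_sub_atTop_nat 1).comp (hφ.tendsto_atTop.comp (tendsto_add_atTop_nat 1))
    · simpa only [hψ, Function.comp_def] using hw.comp (tendsto_add_atTop_nat 1)
  refine ⟨hΛ.apply_eq_smul_of_norm_exp_apply ?_ ?_, hw_norm⟩
  · rw [hexp, hw_norm, mul_one]
  · rw [hexp_neg, hw_norm, mul_one]

/-- With `Λ`, `d`, `A` as in the setup, if `v ≠ 0`, `d(v) = c` is the limit of
`log ‖A (i+1) v‖ - log ‖A i v‖`, and `w` is the limit of a subsequence of the normalized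
vectors `A i v / ‖A i v‖`, then `Λ w = c • w` and `‖w‖ = 1`. -/
theorem stmt_2 {V : Type*} [NormedAddCommGroup V] [InnerProductSpace ℂ V]
    [FiniteDimensional ℂ V]
    (Λ : V →L[ℂ] V) (hΛ : IsSelfAdjoint Λ)
    (k : ℕ) (d : Fin k → ℝ) (hd : StrictAnti d)
    (heig : ∀ μ : ℂ, Module.End.HasEigenvalue (Λ : V →ₗ[ℂ] V) μ ↔ ∃ j, μ = (d j : ℂ))
    (A : ℕ → (V ≃L[ℂ] V))
    (hA : Tendsto (fun i => ((A (i+1) : V →L[ℂ] V).comp ((A i).symm : V →L[ℂ] V)))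
      atTop (𝓝 (NormedSpace.exp Λ)))
    (v : V) (hv : v ≠ 0) (c : ℝ)
    (hc : Tendsto (fun i => Real.log ‖A (i+1) v‖ - Real.log ‖A i v‖) atTop (𝓝 c))
    (w : V) (φ : ℕ → ℕ) (hφ : StrictMono φ)
    (hw : Tendsto (fun m => ‖A (φ m) v‖⁻¹ • (A (φ m) v)) atTop (𝓝 w)) :
    Λ w = (c : ℂ) • w ∧ ‖w‖ = 1 :=
  stmt_2_general Λ hΛ A hA v hv c hc w φ hφ hw
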